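/- (Moon–Moser) For all positive integers n, g(n) = ℓ(n); that is, the maximum number of maximal independent sets in a simple graph on n vertices equals the largest integer expressible as a product of positive integers summing to n. -/

import Mathlib

/-- `ProdOfSum n m` holds if `m` can be written as the product of a nonempty list of
positive integers whose sum is `n`. -/
def ProdOfSum (n m : ℕ) : Prop :=
  ∃ l : List ℕ, l ≠ [] ∧ (∀ a ∈ l, 0 < a) ∧ l.sum = n ∧ l.prod = m

/-- `ell n` is the largest integer expressible as a product of positive integers summing to `n`. -/
noncomputable def ell (n : ℕ) : ℕ := sSup {m | ProdOfSum n m}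

lemma list_prod_le : ∀ l : List ℕ, l.prod ≤ (l.sum + 1) ^ l.length := by
  intro l
  induction l with
  | nil => simp
  | cons a l ih =>
    simp only [List.prod_cons, List.sum_cons, List.length_cons]
    calc a * l.prod ≤ (a + l.sum + 1) * (l.sum + 1) ^ l.length :=
          Nat.mul_le_mul (by omega) ih
      _ ≤ (a + l.sum + 1) * (a + l.sum + 1) ^ l.length :=
          Nat.mul_le_mul_left _ (Nat.pow_le_pow_left (by omega) _)
      _ = (a + l.sum + 1) ^ (l.length + 1) := (pow_succ' _ _).symm

lemma list_length_le_sum : ∀ l : List ℕ, (∀ a ∈ l, 0 < a) → l.length ≤ l.sum := by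
  intro l
  induction l with
  | nil => simp
  | cons a l ih =>
    intro h
    simp only [List.length_cons, List.sum_cons]
    have := ih (fun a ha => h a (List.mem_cons_of_mem _ ha))
    have := h a List.mem_cons_self
    omega

lemma prodOfSum_le {n m : ℕ} (h : ProdOfSum n m) : m ≤ (n+1) ^ n := by
  obtain ⟨l, -, hpos, hsum, hprod⟩ := h
  subst hsum hprod
  calc l.prod ≤ (l.sum + 1) ^ l.length := list_prod_le l
    _ ≤ (l.sum + 1) ^ l.sum := Nat.pow_le_pow_right (by omega) (list_length_le_sum l hpos)

lemma bddAbove_prodOfSum (n : ℕ) : BddAbove {m | ProdOfSum n m} :=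
  ⟨(n+1)^n, fun _ hm => prodOfSum_le hm⟩

lemma le_ell {n m : ℕ} (h : ProdOfSum n m) : m ≤ ell n :=
  le_csSup (bddAbove_prodOfSum n) h

lemma prodOfSum_self (n : ℕ) (hn : 1 ≤ n) : ProdOfSum n n :=
  ⟨[n], by simp, by simp; omega, by simp, by simp⟩

lemma ell_spec (n : ℕ) (hn : 1 ≤ n) : ProdOfSum n (ell n) :=
  Nat.sSup_mem ⟨n, by exact prodOfSum_self n hn⟩ (bddAbove_prodOfSum n)

/-- `L n` : the bound, patched at 0. -/
noncomputable def LL (n : ℕ) : ℕ := if n = 0 then 1 else ell n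

lemma one_le_ell {n : ℕ} (hn : 1 ≤ n) : 1 ≤ ell n :=
  le_trans hn (le_ell (prodOfSum_self n hn))

lemma one_le_LL (n : ℕ) : 1 ≤ LL n := by
  unfold LL; split
  · exact le_refl 1
  · exact one_le_ell (by omega)

lemma LL_mono : Monotone LL := by
  intro m n hmn
  rcases Nat.eq_zero_or_pos m with rfl | hm
  · exact one_le_LL n
  rcases Nat.eq_zero_or_pos (n - m) with h0 | h
  · have : m = n := by omega
    subst this; rfl
  have hn : n ≠ 0 := by omega
  unfold LL
  rw [if_neg (by omega), if_neg hn]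
  obtain ⟨l, hne, hpos, hsum, hprod⟩ := ell_spec m hm
  apply le_ell
  refine ⟨l ++ List.replicate (n - m) 1, by simp [hne], ?_, ?_, ?_⟩
  · intro a ha
    rcases List.mem_append.mp ha with h | h
    · exact hpos a h
    · simp at h; omega
  · simp [hsum]; omega
  · simp [hprod]

lemma mul_LL_le {a k : ℕ} (ha : 1 ≤ a) : a * LL k ≤ ell (k + a) := by
  rcases Nat.eq_zero_or_pos k with rfl | hk
  · simpa [LL] using le_ell (prodOfSum_self a ha)
  · obtain ⟨l, hne, hpos, hsum, hprod⟩ := ell_spec k hk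
    rw [LL, if_neg (by omega)]
    apply le_ell
    refine ⟨a :: l, by simp, ?_, by simp [hsum]; omega, by simp [hprod]⟩
    intro b hb
    rcases List.mem_cons.mp hb with rfl | hb'
    · exact ha
    · exact hpos b hb'

/-- `I` is a maximal independent set (MIS) of `G`: it is independent, and it is not
properly contained in any other independent set. -/
def IsMaxIndepSet {V : Type*} (G : SimpleGraph V) (I : Set V) : Prop :=
  (∀ x ∈ I, ∀ y ∈ I, ¬ G.Adj x y) ∧
  ∀ J : Set V, (∀ x ∈ J, ∀ y ∈ J, ¬ G.Adj x y) → I ⊆ J → J = I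

/-- The number of maximal independent sets of `G`. -/
noncomputable def misCount {V : Type*} (G : SimpleGraph V) : ℕ :=
  Nat.card {I : Set V // IsMaxIndepSet G I}

section MIS

variable {V : Type} (G : SimpleGraph V)

/-- closed neighborhood -/
def cnbhd (w : V) : Set V := insert w (G.neighborSet w)

variable {G}

lemma mem_cnbhd {w x : V} : x ∈ cnbhd G w ↔ x = w ∨ G.Adj w x := by
  simp [cnbhd]

lemma mis_inter_cnbhd {I : Set V} (hI : IsMaxIndepSet G I) (v : V) :
    ∃ w ∈ I, w ∈ cnbhd G v := by
  by_contra h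
  push_neg at h
  have hv : v ∉ I := fun hv => h v hv (mem_cnbhd.mpr (Or.inl rfl))
  have hind : ∀ x ∈ insert v I, ∀ y ∈ insert v I, ¬ G.Adj x y := by
    intro x hx y hy hadj
    rcases hx with rfl | hx <;> rcases hy with rfl | hy
    · exact G.irrefl hadj
    · exact h y hy (mem_cnbhd.mpr (Or.inr hadj))
    · exact h x hx (mem_cnbhd.mpr (Or.inr hadj.symm))
    · exact hI.1 x hx y hy hadj
  have heq := hI.2 _ hind (Set.subset_insert _ _)
  exact hv (heq ▸ Set.mem_insert v I)

lemma mis_not_cnbhd {I : Set V} (hI : IsMaxIndepSet G I) {w x : V} (hw : w ∈ I)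
    (hx : x ∈ I) (hxw : x ≠ w) : x ∈ (cnbhd G w)ᶜ := by
  intro hmem
  rcases mem_cnbhd.mp hmem with rfl | hadj
  · exact hxw rfl
  · exact hI.1 w hw x hx hadj

lemma mis_restrict {I : Set V} {w : V} (hI : IsMaxIndepSet G I) (hw : w ∈ I) :
    IsMaxIndepSet (G.induce (cnbhd G w)ᶜ) {x : ↥(cnbhd G w)ᶜ | ↑x ∈ I} := by
  constructor
  · intro x hx y hy hadj
    exact hI.1 _ hx _ hy (SimpleGraph.comap_adj.mp hadj)
  · intro K hK hJK
    apply Set.Subset.antisymm _ hJK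
    intro u hu
    -- show ↑u ∈ I
    have hind : ∀ x ∈ insert (↑u : V) I, ∀ y ∈ insert (↑u : V) I, ¬ G.Adj x y := by
      have key : ∀ x ∈ I, ¬ G.Adj ↑u x := by
        intro x hx hadj
        by_cases hxw : x = w
        · subst hxw
          exact u.2 (mem_cnbhd.mpr (Or.inr hadj.symm))
        · have hxmem : x ∈ (cnbhd G w)ᶜ := mis_not_cnbhd hI hw hx hxw
          have hxJ : (⟨x, hxmem⟩ : ↥(cnbhd G w)ᶜ) ∈ K := hJK hx
          exact hK u hu ⟨x, hxmem⟩ hxJ (SimpleGraph.comap_adj.mpr hadj)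
      intro x hx y hy hadj
      rcases hx with rfl | hx <;> rcases hy with rfl | hy
      · exact G.irrefl hadj
      · exact key y hy hadj
      · exact key x hx hadj.symm
      · exact hI.1 x hx y hy hadj
    have heq := hI.2 _ hind (Set.subset_insert _ _)
    show (↑u : V) ∈ I
    rw [← heq]
    exact Set.mem_insert _ _

lemma mis_eq_insert {I : Set V} {w : V} (hI : IsMaxIndepSet G I) (hw : w ∈ I) :
    I = insert w (Subtype.val '' {x : ↥(cnbhd G w)ᶜ | ↑x ∈ I}) := by
  ext x
  constructor
  · intro hx
    by_cases hxw : x = w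
    · exact Or.inl hxw
    · exact Or.inr ⟨⟨x, mis_not_cnbhd hI hw hx hxw⟩, hx, rfl⟩
  · rintro (rfl | ⟨y, hy, rfl⟩)
    · exact hw
    · exact hy

end MIS

lemma nat_card_sigma {ι : Type} [Fintype ι] (f : ι → Type) [∀ i, Finite (f i)] :
    Nat.card (Σ i, f i) = ∑ i, Nat.card (f i) := by
  have : ∀ i, Fintype (f i) := fun i => Fintype.ofFinite _
  simp [Nat.card_eq_fintype_card, Fintype.card_sigma]

lemma misCount_le_LL : ∀ (n : ℕ) (V : Type) [Finite V] (G : SimpleGraph V),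
    Nat.card V = n → misCount G ≤ LL n := by
  intro n
  induction n using Nat.strong_induction_on with
  | _ n ih =>
    intro V _ G hcard
    rcases Nat.eq_zero_or_pos n with rfl | hn
    · -- empty vertex set
      have hemp : IsEmpty V := by
        rcases Nat.card_eq_zero.mp hcard with h | h
        · exact h
        · exact absurd ‹Finite V› h.not_finite
      have : misCount G = 1 := by
        rw [misCount, Nat.card_eq_one_iff_unique]
        constructor
        · constructor
          intro ⟨I, hI⟩ ⟨J, hJ⟩
          have : I = J := by ext x; exact (hemp.false x).elim
          simp [this]
        · refine ⟨∅, by simp, ?_⟩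
          intro J _ _
          ext x; exact (hemp.false x).elim
      simp [this, LL]
    · -- main case
      have hne : Nonempty V := (Nat.card_pos_iff.mp (hcard ▸ hn)).1
      classical
      have _instV : Fintype V := Fintype.ofFinite V
      set D : V → ℕ := fun w => (cnbhd G w).ncard with hD
      obtain ⟨v, hv⟩ := Finite.exists_min D
      have hD1 : ∀ w, 1 ≤ D w := by
        intro w
        have hmem : w ∈ cnbhd G w := mem_cnbhd.mpr (Or.inl rfl)
        have := (Set.ncard_pos (Set.toFinite _)).mpr ⟨w, hmem⟩
        exact this
      have hsplit : ∀ w : V, D w + (cnbhd G w)ᶜ.ncard = n := by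
        intro w
        have h1 := Set.ncard_add_ncard_compl (cnbhd G w)
        rw [hcard] at h1
        simpa [hD] using h1
      have hDcompl : ∀ w : V, Nat.card ↥((cnbhd G w)ᶜ) = n - D w := by
        intro w
        rw [Nat.card_coe_set_eq]
        have := hsplit w
        omega
      have hDn : ∀ w, D w ≤ n := fun w => by have := hsplit w; omega
      -- the injection into a sigma type
      have hstep : misCount G ≤ ∑ w : ↥(cnbhd G v),
          misCount (G.induce ((cnbhd G (↑w : V))ᶜ)) := by
        have pick : ∀ I : {I : Set V // IsMaxIndepSet G I}, ∃ w, w ∈ I.1 ∧ w ∈ cnbhd G v :=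
          fun I => (mis_inter_cnbhd I.2 v).imp (fun w h => h)
        choose wf hwf1 hwf2 using pick
        set F : {I : Set V // IsMaxIndepSet G I} →
            Σ w : ↥(cnbhd G v), {J : Set ↥((cnbhd G (↑w : V))ᶜ) //
              IsMaxIndepSet (G.induce ((cnbhd G (↑w : V))ᶜ)) J} :=
          fun I => ⟨⟨wf I, hwf2 I⟩, ⟨{x | ↑x ∈ I.1}, mis_restrict I.2 (hwf1 I)⟩⟩ with hF
        have hFinj : Function.Injective F := by
          have recover : ∀ I, I.1 = insert (↑(F I).1 : V)
              (Subtype.val '' ((F I).2.1 : Set ↥((cnbhd G (↑(F I).1 : V))ᶜ))) := by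
            intro I
            exact mis_eq_insert I.2 (hwf1 I)
          intro I I' hII
          apply Subtype.ext
          rw [recover I, recover I', hII]
        have := Nat.card_le_card_of_injective F hFinj
        calc misCount G ≤ Nat.card (Σ w : ↥(cnbhd G v), {J : Set ↥((cnbhd G (↑w : V))ᶜ) //
              IsMaxIndepSet (G.induce ((cnbhd G (↑w : V))ᶜ)) J}) := this
          _ = ∑ w : ↥(cnbhd G v), misCount (G.induce ((cnbhd G (↑w : V))ᶜ)) := by
              rw [nat_card_sigma]
              rfl
      have hcardS : Fintype.card ↥(cnbhd G v) = D v := by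
        rw [← Nat.card_eq_fintype_card, Nat.card_coe_set_eq]
      have hterm : ∀ w : ↥(cnbhd G v),
          misCount (G.induce ((cnbhd G (↑w : V))ᶜ)) ≤ LL (n - D v) := by
        intro w
        have hlt : n - D (↑w : V) < n := by have := hD1 (↑w : V); omega
        have := ih (n - D (↑w : V)) hlt ↥((cnbhd G (↑w : V))ᶜ) (G.induce _)
          (hDcompl (↑w : V))
        exact le_trans this (LL_mono (by have := hv (↑w : V); omega))
      calc misCount G ≤ ∑ w : ↥(cnbhd G v),
            misCount (G.induce ((cnbhd G (↑w : V))ᶜ)) := hstep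
        _ ≤ ∑ _w : ↥(cnbhd G v), LL (n - D v) := Finset.sum_le_sum (fun w _ => hterm w)
        _ = D v * LL (n - D v) := by
            rw [Finset.sum_const, Finset.card_univ, hcardS, smul_eq_mul]
        _ ≤ ell ((n - D v) + D v) := mul_LL_le (hD1 v)
        _ = ell n := by have := hDn v; congr 1; omega
        _ = LL n := by rw [LL, if_neg (by omega)]

section Fiber

variable {V W : Type} [Finite V] [Fintype W]

/-- disjoint-cliques graph given by the fibers of `f` -/
def fiberGraph (f : V → W) : SimpleGraph V where
  Adj x y := f x = f y ∧ x ≠ y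
  symm := ⟨by rintro x y ⟨h1, h2⟩; exact ⟨h1.symm, h2.symm⟩⟩
  loopless := ⟨by rintro x ⟨-, h⟩; exact h rfl⟩

lemma misCount_fiberGraph (f : V → W) (hf : Function.Surjective f) :
    misCount (fiberGraph f) = ∏ w, Nat.card ↥(f ⁻¹' {w}) := by
  classical
  set G := fiberGraph f with hG
  have hadj : ∀ x y, G.Adj x y ↔ f x = f y ∧ x ≠ y := fun x y => Iff.rfl
  set Φ : (∀ w, ↥(f ⁻¹' {w})) → Set V := fun g => Set.range (fun w => ↑(g w)) with hΦ
  have hfg : ∀ (g : ∀ w, ↥(f ⁻¹' {w})) (w : W), f ↑(g w) = w := fun g w => (g w).2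
  have hmis : ∀ g, IsMaxIndepSet G (Φ g) := by
    intro g
    constructor
    · rintro x ⟨w1, rfl⟩ y ⟨w2, rfl⟩ hadj'
      obtain ⟨h1, h2⟩ := hadj'
      rw [hfg g w1, hfg g w2] at h1
      subst h1
      exact h2 rfl
    · intro J hJ hsub
      apply Set.Subset.antisymm _ hsub
      intro u hu
      have hx : (↑(g (f u)) : V) ∈ J := hsub ⟨f u, rfl⟩
      by_cases he : u = ↑(g (f u))
      · rw [he]; exact ⟨f u, rfl⟩
      · exact absurd ⟨hfg g (f u), fun h => he h.symm⟩ (hJ _ hx _ hu)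
  have hbij : Function.Bijective (fun g => (⟨Φ g, hmis g⟩ :
      {I : Set V // IsMaxIndepSet G I})) := by
    constructor
    · intro g g' hgg
      have hr : Φ g = Φ g' := congrArg Subtype.val hgg
      funext w
      have : (↑(g w) : V) ∈ Φ g' := hr ▸ ⟨w, rfl⟩
      obtain ⟨w', hw'⟩ := this
      have hw2 : (↑(g' w') : V) = ↑(g w) := hw'
      have : w' = w := by rw [← hfg g' w', hw2, hfg g w]
      subst this
      exact Subtype.ext hw2.symm
    · rintro ⟨I, hI⟩
      have hexists : ∀ w, ∃ x, x ∈ I ∧ f x = w := by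
        intro w
        by_contra h
        push_neg at h
        obtain ⟨x₀, hx₀⟩ := hf w
        have hx₀I : x₀ ∉ I := fun hmem => h x₀ hmem hx₀
        have hind : ∀ x ∈ insert x₀ I, ∀ y ∈ insert x₀ I, ¬ G.Adj x y := by
          intro x hx y hy hxy
          obtain ⟨h1, h2⟩ := hxy
          rcases hx with rfl | hx <;> rcases hy with rfl | hy
          · exact h2 rfl
          · exact h y hy (h1 ▸ hx₀)
          · exact h x hx (h1 ▸ hx₀)
          · exact hI.1 x hx y hy ⟨h1, h2⟩
        have heq := hI.2 _ hind (Set.subset_insert _ _)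
        exact hx₀I (heq ▸ Set.mem_insert _ _)
      choose xf hxf1 hxf2 using hexists
      refine ⟨fun w => ⟨xf w, hxf2 w⟩, ?_⟩
      apply Subtype.ext
      show Φ _ = I
      apply Set.Subset.antisymm
      · rintro x ⟨w, rfl⟩
        exact hxf1 w
      · intro y hy
        have hxy : xf (f y) ∈ I := hxf1 (f y)
        have : y = xf (f y) := by
          by_contra hne
          exact hI.1 y hy (xf (f y)) hxy ⟨(hxf2 (f y)).symm, hne⟩
        exact ⟨f y, this.symm⟩
  rw [misCount, ← Nat.card_eq_of_bijective _ hbij, Nat.card_pi]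

end Fiber

/-- fiber of sigma -/
def sigmaFiber {ι : Type} (β : ι → Type) (w : ι) :
    {p : Σ i, β i // p.1 = w} ≃ β w where
  toFun x := cast (congrArg β x.2) x.1.2
  invFun b := ⟨⟨w, b⟩, rfl⟩
  left_inv := by rintro ⟨⟨i, b⟩, rfl⟩; rfl
  right_inv := by intro b; rfl

lemma exists_graph_eq_ell (n : ℕ) (hn : 1 ≤ n) :
    ∃ G : SimpleGraph (Fin n), misCount G = ell n := by
  classical
  obtain ⟨l, hne, hpos, hsum, hprod⟩ := ell_spec n hn
  set β : Fin l.length → Type := fun i => Fin (l.get i) with hβ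
  have hcard : Fintype.card (Σ i, β i) = n := by
    rw [Fintype.card_sigma]
    simp only [hβ, Fintype.card_fin]
    rw [← hsum, ← List.sum_ofFn (f := l.get), List.ofFn_get]
  set e : (Σ i, β i) ≃ Fin n := Fintype.equivFinOfCardEq hcard with he
  set f : Fin n → Fin l.length := fun x => (e.symm x).1 with hf
  have hfsurj : Function.Surjective f := by
    intro w
    have : 0 < l.get w := hpos _ (l.get_mem _)
    refine ⟨e ⟨w, ⟨0, this⟩⟩, ?_⟩
    simp [hf]
  refine ⟨fiberGraph f, ?_⟩
  rw [misCount_fiberGraph f hfsurj]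
  have hfiber : ∀ w, Nat.card ↥(f ⁻¹' {w}) = l.get w := by
    intro w
    have e1 : ↥(f ⁻¹' {w}) ≃ {p : Σ i, β i // p.1 = w} :=
      Equiv.subtypeEquiv e.symm (fun x => by simp [hf, Set.mem_preimage])
    rw [Nat.card_congr (e1.trans (sigmaFiber β w))]
    simp [hβ, Nat.card_eq_fintype_card]
  calc ∏ w, Nat.card ↥(f ⁻¹' {w}) = ∏ w, l.get w :=
        Finset.prod_congr rfl (fun w _ => hfiber w)
    _ = l.prod := by rw [← List.prod_ofFn (f := l.get), List.ofFn_get]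
    _ = ell n := hprod


/-- `maxMis n` is the maximum number of maximal independent sets among all simple graphs
on `n` vertices. -/
noncomputable def maxMis (n : ℕ) : ℕ := sSup {k | ∃ G : SimpleGraph (Fin n), misCount G = k}

/-- Moon–Moser: `maxMis n = ell n` for all positive `n`. -/
theorem moon_moser : ∀ n : ℕ, 1 ≤ n → maxMis n = ell n := by
  intro n hn
  have hub : ∀ k ∈ {k | ∃ G : SimpleGraph (Fin n), misCount G = k}, k ≤ ell n := by
    rintro k ⟨G, rfl⟩
    have hcard : Nat.card (Fin n) = n := by simp
    have := misCount_le_LL n (Fin n) G hcard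
    rwa [LL, if_neg (by omega)] at this
  apply le_antisymm
  · exact csSup_le ⟨misCount (⊥ : SimpleGraph (Fin n)), ⊥, rfl⟩ hub
  · obtain ⟨G, hG⟩ := exists_graph_eq_ell n hn
    exact le_csSup ⟨ell n, hub⟩ ⟨G, hG⟩
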